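/- There is no coalition logic (CL) formula equivalent to the FOCL sentence ∃x⟨x,x⟩¬p: there exist two two-agent CGSs G₁ and G₂ with a state s such that G₁,s and G₂,s satisfy the same CL formulas, G₁,s ⊨ ∃x⟨x,x⟩¬p, and G₂,s ⊭ ∃x⟨x,x⟩¬p. -/

import Mathlib

/-- Terms: variables or constants. -/
inductive Tm (C : Type) : Type
  | var : ℕ → Tm C
  | const : C → Tm C
deriving DecidableEq

/-- Formulas of first-order coalition logic over a signature ⟨n, C, Ap⟩. -/
inductive Form (n : ℕ) (C : Type) (Ap : Type) : Type
  | atom : Ap → Form n C Ap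
  | neg : Form n C Ap → Form n C Ap
  | and : Form n C Ap → Form n C Ap → Form n C Ap
  | box : (Fin n → Tm C) → Form n C Ap → Form n C Ap
  | all : ℕ → Form n C Ap → Form n C Ap

namespace Form

variable {n : ℕ} {C Ap : Type}

def imp (φ ψ : Form n C Ap) : Form n C Ap := .neg (.and φ (.neg ψ))
def iff (φ ψ : Form n C Ap) : Form n C Ap := .and (imp φ ψ) (imp ψ φ)
def ex (x : ℕ) (φ : Form n C Ap) : Form n C Ap := .neg (.all x (.neg φ))

open Classical in
/-- Substitution of a term for a variable. -/
noncomputable def substT (t : Tm C) (x : ℕ) : Form n C Ap → Form n C Ap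
  | .atom p => .atom p
  | .neg φ => .neg (substT t x φ)
  | .and φ ψ => .and (substT t x φ) (substT t x ψ)
  | .box ts φ => .box (fun i => if ts i = .var x then t else ts i) (substT t x φ)
  | .all y φ => if y = x then .all y φ else .all y (substT t x φ)

/-- Substitution of a constant for a variable. -/
noncomputable def subst (a : C) (x : ℕ) (φ : Form n C Ap) : Form n C Ap := substT (.const a) x φ

/-- Free variables. -/
def FV : Form n C Ap → Finset ℕ
  | .atom _ => ∅
  | .neg φ => FV φ
  | .and φ ψ => FV φ ∪ FV ψ
  | .box ts φ => FV φ ∪ Finset.univ.biUnion (fun i => match ts i with | Tm.var x => {x} | _ => ∅)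
  | .all y φ => FV φ \ {y}

/-- A sentence (closed formula). -/
def closed (φ : Form n C Ap) : Prop := FV φ = ∅

/-- Universal closure of a formula. -/
def closure (φ : Form n C Ap) : Form n C Ap := ((FV φ).sort (· ≤ ·)).foldr Form.all φ

def size : Form n C Ap → ℕ
  | .atom _ => 1
  | .neg φ => size φ + 1
  | .and φ ψ => size φ + size ψ + 1
  | .box _ φ => size φ + 1
  | .all _ φ => size φ + 1

theorem size_substT (t : Tm C) (x : ℕ) (φ : Form n C Ap) :
    size (substT t x φ) = size φ := by
  induction φ with
  | atom p => rfl
  | neg φ ih => simp [substT, size, ih]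
  | and φ ψ ih1 ih2 => simp [substT, size, ih1, ih2]
  | box ts φ ih => simp [substT, size, ih]
  | all y φ ih => by_cases h : y = x <;> simp [substT, size, h, ih]

/-- Whether a term occurs in a formula. -/
def occursT (t : Tm C) : Form n C Ap → Prop
  | .atom _ => False
  | .neg φ => occursT t φ
  | .and φ ψ => occursT t φ ∨ occursT t ψ
  | .box ts φ => (∃ i, ts i = t) ∨ occursT t φ
  | .all y φ => (t = Tm.var y) ∨ occursT t φ

end Form

/-- A concurrent game structure over a signature ⟨n, C, Ap⟩ (actions = constants). -/
structure CGS (n : ℕ) (C : Type) (Ap : Type) where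
  S : Type
  R : S → (Fin n → C) → S → Prop
  V : Ap → S → Prop

namespace CGS

variable {n : ℕ} {C Ap : Type}

def Serial (G : CGS n C Ap) : Prop := ∀ s d, ∃ t, G.R s d t

def Functional (G : CGS n C Ap) : Prop := ∀ s d t v, G.R s d t → G.R s d v → t = v

end CGS

/-- Satisfaction of (closed) formulas in a CGS. -/
def Sat {n : ℕ} {C Ap : Type} (G : CGS n C Ap) : G.S → Form n C Ap → Prop
  | s, .atom p => G.V p s
  | s, .neg φ => ¬ Sat G s φ
  | s, .and φ ψ => Sat G s φ ∧ Sat G s ψ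
  | s, .box ts φ => ∃ d : Fin n → C, (∀ i, ts i = Tm.const (d i)) ∧ ∃ t, G.R s d t ∧ Sat G t φ
  | s, .all x φ => ∀ a : C, Sat G s (Form.subst a x φ)
termination_by _ φ => Form.size φ
decreasing_by all_goals simp [Form.subst, Form.size_substT, Form.size] <;> omega

/-- Truth of a possibly open formula: truth of its universal closure. -/
def SatC {n : ℕ} {C Ap : Type} (G : CGS n C Ap) (s : G.S) (φ : Form n C Ap) : Prop :=
  Sat G s (Form.closure φ)

/-- Validity in a CGS. -/
def ValidIn {n : ℕ} {C Ap : Type} (G : CGS n C Ap) (φ : Form n C Ap) : Prop :=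
  ∀ s : G.S, SatC G s φ

/-- Propositional evaluation treating atoms, boxes and quantified formulas as atomic. -/
def evalP {n : ℕ} {C Ap : Type} (v : Form n C Ap → Prop) : Form n C Ap → Prop
  | .neg φ => ¬ evalP v φ
  | .and φ ψ => evalP v φ ∧ evalP v ψ
  | .atom p => v (.atom p)
  | .box ts φ => v (.box ts φ)
  | .all x φ => v (.all x φ)

/-- Propositional tautologies. -/
def Taut {n : ℕ} {C Ap : Type} (φ : Form n C Ap) : Prop :=
  ∀ v : Form n C Ap → Prop, evalP v φ

/-- The axiom system of first-order coalition logic. -/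
inductive Deriv {n : ℕ} {C Ap : Type} : Form n C Ap → Prop
  | PC {φ} : Taut φ → Deriv φ
  | K (ts : Fin n → Tm C) (φ ψ) :
      Deriv (Form.iff (.and (.box ts φ) (.box ts ψ)) (.box ts (.and φ ψ)))
  | N (ts : Fin n → Tm C) (φ) :
      Deriv (Form.iff (.neg (.box ts φ)) (.box ts (.neg φ)))
  | E (x : ℕ) (t : Tm C) (φ) : Deriv (Form.imp (.all x φ) (Form.substT t x φ))
  | B (ts : Fin n → Tm C) (x : ℕ) (φ) (h : ∀ i, ts i ≠ Tm.var x) :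
      Deriv (Form.imp (.all x (.box ts φ)) (.box ts (.all x φ)))
  | MP {φ ψ} : Deriv (Form.imp φ ψ) → Deriv φ → Deriv ψ
  | Nec (ts : Fin n → Tm C) {φ} : Deriv φ → Deriv (.box ts φ)
  | Gen {φ ψ} (t : Tm C) (x : ℕ) :
      Deriv (Form.imp φ (Form.substT t x ψ)) → ¬ Form.occursT t φ →
      Deriv (Form.imp φ (.all x ψ))

/-- Derivability from a set of formulas. -/
def DerivFrom {n : ℕ} {C Ap : Type} (X : Set (Form n C Ap)) (φ : Form n C Ap) : Prop :=
  ∃ L : List (Form n C Ap), (∀ ψ ∈ L, ψ ∈ X) ∧ Deriv (L.foldr Form.imp φ)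

def Consistent {n : ℕ} {C Ap : Type} (X : Set (Form n C Ap)) : Prop :=
  ¬ ∃ φ, DerivFrom X φ ∧ DerivFrom X (.neg φ)

/-- A set of sentences. -/
def SentenceSet {n : ℕ} {C Ap : Type} (X : Set (Form n C Ap)) : Prop :=
  ∀ φ ∈ X, Form.closed φ

/-- Maximal consistent set (of sentences). -/
def MCS {n : ℕ} {C Ap : Type} (X : Set (Form n C Ap)) : Prop :=
  Consistent X ∧ ∀ ψ, Form.closed ψ → ψ ∉ X → ¬ Consistent (insert ψ X)

/-- The ∀-property. -/
def AllProp {n : ℕ} {C Ap : Type} (X : Set (Form n C Ap)) : Prop :=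
  ∀ (φ : Form n C Ap) (x : ℕ), Form.FV φ ⊆ {x} →
    ∃ a : C, Form.imp (Form.subst a x φ) (.all x φ) ∈ X

/-- The canonical model. -/
def canonical (n : ℕ) (C Ap : Type) : CGS n C Ap where
  S := {X : Set (Form n C Ap) // SentenceSet X ∧ MCS X ∧ AllProp X}
  R := fun X d Y => ∀ φ, φ ∈ Y.1 → Form.box (fun i => Tm.const (d i)) φ ∈ X.1
  V := fun p X => Form.atom p ∈ X.1

/-- Renaming of constants. -/
def Tm.mapC {C C' : Type} (f : C → C') : Tm C → Tm C'
  | .var x => .var x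
  | .const c => .const (f c)

def Form.mapC {n : ℕ} {C C' Ap : Type} (f : C → C') : Form n C Ap → Form n C' Ap
  | .atom p => .atom p
  | .neg φ => .neg (mapC f φ)
  | .and φ ψ => .and (mapC f φ) (mapC f ψ)
  | .box ts φ => .box (fun i => (ts i).mapC f) (mapC f φ)
  | .all y φ => .all y (mapC f φ)


/-- Coalition logic formulas over two agents. -/
inductive CLForm (Ap : Type) : Type
  | atom : Ap → CLForm Ap
  | neg : CLForm Ap → CLForm Ap
  | and : CLForm Ap → CLForm Ap → CLForm Ap
  | coal : Set (Fin 2) → CLForm Ap → CLForm Ap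

/-- Coalition logic semantics over a two-agent CGS. -/
def SatCL {C Ap : Type} (G : CGS 2 C Ap) : G.S → CLForm Ap → Prop
  | s, .atom p => G.V p s
  | s, .neg φ => ¬ SatCL G s φ
  | s, .and φ ψ => SatCL G s φ ∧ SatCL G s ψ
  | s, .coal Co φ => ∃ f : Fin 2 → C, ∀ g : Fin 2 → C, (∀ i ∈ Co, g i = f i) →
      ∀ t, G.R s g t → SatCL G t φ

/-! In `parityGame Ap c` a move toggles the state iff the parity of the action profile is `c`.
The FOCL sentence quantifies over the diagonal profiles, which all have parity `false`, so from
`true` it holds exactly when `c = false`. A coalition's power in CL, however, is unchanged when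
agent 1's actions are relabelled by negation, and that relabelling flips every parity: the identity
on states is an alternating bisimulation between the games with `c` and `!c`. -/

namespace CGS

variable {C Ap : Type}

def outcomes (G : CGS 2 C Ap) (s : G.S) (Co : Set (Fin 2)) (f : Fin 2 → C) : Set G.S :=
  {t | ∃ g : Fin 2 → C, (∀ i ∈ Co, g i = f i) ∧ G.R s g t}

theorem satCL_coal_iff (G : CGS 2 C Ap) (s : G.S) (Co : Set (Fin 2)) (φ : CLForm Ap) :
    SatCL G s (.coal Co φ) ↔ ∃ f, ∀ t ∈ G.outcomes s Co f, SatCL G t φ := by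
  simp only [SatCL, outcomes, Set.mem_ofPred_eq]
  exact exists_congr fun f => ⟨fun h t ⟨g, hg, hR⟩ => h g hg t hR, fun h g hg t hR => h t ⟨g, hg, hR⟩⟩

structure IsAltBisim {C₁ C₂ : Type} (G₁ : CGS 2 C₁ Ap) (G₂ : CGS 2 C₂ Ap)
    (Z : G₁.S → G₂.S → Prop) : Prop where
  val_iff : ∀ s₁ s₂, Z s₁ s₂ → ∀ p, G₁.V p s₁ ↔ G₂.V p s₂
  forth : ∀ s₁ s₂, Z s₁ s₂ → ∀ Co f₁, ∃ f₂,
    ∀ t₂ ∈ G₂.outcomes s₂ Co f₂, ∃ t₁ ∈ G₁.outcomes s₁ Co f₁, Z t₁ t₂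
  back : ∀ s₁ s₂, Z s₁ s₂ → ∀ Co f₂, ∃ f₁,
    ∀ t₁ ∈ G₁.outcomes s₁ Co f₁, ∃ t₂ ∈ G₂.outcomes s₂ Co f₂, Z t₁ t₂

theorem IsAltBisim.satCL_iff {C₁ C₂ : Type} {G₁ : CGS 2 C₁ Ap} {G₂ : CGS 2 C₂ Ap}
    {Z : G₁.S → G₂.S → Prop} (hZ : IsAltBisim G₁ G₂ Z) (φ : CLForm Ap) :
    ∀ s₁ s₂, Z s₁ s₂ → (SatCL G₁ s₁ φ ↔ SatCL G₂ s₂ φ) := by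
  induction φ with
  | atom p => exact fun s₁ s₂ h => hZ.val_iff s₁ s₂ h p
  | neg φ ih => exact fun s₁ s₂ h => not_congr (ih s₁ s₂ h)
  | and φ ψ ihφ ihψ => exact fun s₁ s₂ h => and_congr (ihφ s₁ s₂ h) (ihψ s₁ s₂ h)
  | coal Co φ ih =>
    intro s₁ s₂ h
    simp only [satCL_coal_iff]
    constructor
    · rintro ⟨f₁, hf₁⟩
      obtain ⟨f₂, hf₂⟩ := hZ.forth s₁ s₂ h Co f₁
      refine ⟨f₂, fun t₂ ht₂ => ?_⟩
      obtain ⟨t₁, ht₁, hZt⟩ := hf₂ t₂ ht₂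
      exact (ih t₁ t₂ hZt).mp (hf₁ t₁ ht₁)
    · rintro ⟨f₂, hf₂⟩
      obtain ⟨f₁, hf₁⟩ := hZ.back s₁ s₂ h Co f₂
      refine ⟨f₁, fun t₁ ht₁ => ?_⟩
      obtain ⟨t₂, ht₂, hZt⟩ := hf₁ t₁ ht₁
      exact (ih t₁ t₂ hZt).mpr (hf₂ t₂ ht₂)

end CGS

theorem sat_ex_box_var_iff {n : ℕ} {C Ap : Type} (G : CGS n C Ap) (s : G.S) (x : ℕ)
    (φ : Form n C Ap) :
    Sat G s (Form.ex x (Form.box (fun _ => Tm.var x) φ)) ↔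
      ∃ a : C, ∃ t, G.R s (fun _ => a) t ∧ Sat G t (Form.subst a x φ) := by
  simp only [Form.ex, Sat, Form.subst, Form.substT, if_true, not_forall, not_not]
  refine exists_congr fun a => ⟨?_, fun h => ⟨fun _ => a, fun _ => rfl, h⟩⟩
  rintro ⟨d, hd, ht⟩
  obtain rfl : d = fun _ => a := funext fun i => (Tm.const.inj (hd i)).symm
  exact ht

def parityMove (c s : Bool) (d : Fin 2 → Bool) : Bool :=
  if (d 0 ^^ d 1) = c then !s else s

abbrev parityGame (Ap : Type) (c : Bool) : CGS 2 Bool Ap where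
  S := Bool
  R s d t := t = parityMove c s d
  V _ s := s = true

def flipAgent1 (d : Fin 2 → Bool) : Fin 2 → Bool := Function.update d 1 (!d 1)

theorem flipAgent1_involutive : Function.Involutive flipAgent1 := by
  intro d
  funext i
  fin_cases i <;> simp [flipAgent1]

theorem flipAgent1_agree_iff (g f : Fin 2 → Bool) (Co : Set (Fin 2)) :
    (∀ i ∈ Co, flipAgent1 g i = flipAgent1 f i) ↔ ∀ i ∈ Co, g i = f i := by
  refine forall₂_congr fun i _ => ?_
  fin_cases i <;> simp [flipAgent1]

theorem parityMove_flipAgent1 (c s : Bool) (d : Fin 2 → Bool) :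
    parityMove c s (flipAgent1 d) = parityMove (!c) s d := by
  simp only [parityMove, flipAgent1, Function.update_self,
    Function.update_of_ne (show (0 : Fin 2) ≠ 1 by decide)]
  cases c <;> cases d 0 <;> cases d 1 <;> rfl

theorem parityGame_outcomes_flipAgent1 {Ap : Type} (c s : Bool) (Co : Set (Fin 2))
    (f : Fin 2 → Bool) :
    (parityGame Ap c).outcomes s Co (flipAgent1 f) = (parityGame Ap (!c)).outcomes s Co f := by
  ext t
  simp only [CGS.outcomes, Set.mem_ofPred_eq]
  rw [flipAgent1_involutive.surjective.exists]
  simp only [flipAgent1_agree_iff, parityMove_flipAgent1]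

theorem parityGame_isAltBisim (Ap : Type) (c : Bool) :
    CGS.IsAltBisim (parityGame Ap c) (parityGame Ap (!c)) Eq := by
  refine ⟨fun _ _ h _ => by rw [h], ?_, ?_⟩
  · rintro s _ rfl Co f
    refine ⟨flipAgent1 f, fun t ht => ⟨t, ?_, rfl⟩⟩
    rwa [parityGame_outcomes_flipAgent1, Bool.not_not] at ht
  · rintro s _ rfl Co f
    exact ⟨flipAgent1 f, fun t ht => ⟨t, parityGame_outcomes_flipAgent1 c s Co f ▸ ht, rfl⟩⟩

theorem parityGame_serial (Ap : Type) (c : Bool) : (parityGame Ap c).Serial :=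
  fun _ _ => ⟨_, rfl⟩

theorem parityGame_functional (Ap : Type) (c : Bool) : (parityGame Ap c).Functional :=
  fun _ _ _ _ ht hv => ht.trans hv.symm

theorem sat_parityGame_ex_box_var_neg_atom_iff {Ap : Type} (p : Ap) (c : Bool) :
    Sat (parityGame Ap c) true
        (Form.ex 0 (Form.box (fun _ => Tm.var 0) (Form.neg (Form.atom p)))) ↔ c = false := by
  refine (sat_ex_box_var_iff _ _ _ _).trans ?_
  simp [parityMove, Form.subst, Form.substT, Sat]

/-- no CL formula is equivalent to ∃x⟨x,x⟩¬p. -/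
theorem cl_cannot_express {Ap : Type} (p : Ap) :
    ∃ (G₁ G₂ : CGS 2 Bool Ap) (s₁ : G₁.S) (s₂ : G₂.S),
      G₁.Serial ∧ G₁.Functional ∧ G₂.Serial ∧ G₂.Functional ∧
      (∀ φ : CLForm Ap, SatCL G₁ s₁ φ ↔ SatCL G₂ s₂ φ) ∧
      Sat G₁ s₁ (Form.ex 0 (Form.box (fun _ => Tm.var 0) (Form.neg (Form.atom p)))) ∧
      ¬ Sat G₂ s₂ (Form.ex 0 (Form.box (fun _ => Tm.var 0) (Form.neg (Form.atom p)))) := by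
  refine ⟨parityGame Ap false, parityGame Ap true, true, true,
    parityGame_serial Ap false, parityGame_functional Ap false,
    parityGame_serial Ap true, parityGame_functional Ap true,
    fun φ => (parityGame_isAltBisim Ap false).satCL_iff φ true true rfl, ?_, ?_⟩
  · exact (sat_parityGame_ex_box_var_neg_atom_iff p false).mpr rfl
  · exact (sat_parityGame_ex_box_var_neg_atom_iff p true).not.mpr Bool.true_eq_false_eq_False
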